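/- Let n ≥ 1, let k_{ij} (1 ≤ i, j ≤ n) be real weights with k_{ii} = −2, k_{ij} = k_{ji}, and k_{ij} = 0 whenever |i−j| > 1, extended by k_{i0} = k_{i,n+1} = 0. Let p = (p_1,…,p_n) ∈ ℝ^n be a position with potential q = (q_0,…,q_n), suppose 1 ≤ i ≤ n with p_i < 0, and suppose k_{i,i-1} ≤ 1 and k_{i,i+1} ≤ 1. Let p' be the position obtained by firing i and let q' be its potential. Then inv(q') ≤ inv(q) − 1. -/

import Mathlib

/-
Write `i = j + 1`. Firing `i` changes the potential `q` into `q ∘ τ + s`, where `τ` swaps `j` and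
`j + 1` and `s = p i (k i j - 1) [j ≤ ·] + p i (k i (j+2) - 1) [j + 2 ≤ ·]` is nondecreasing because
`p i < 0` and both weights are at most `1`. Adding a nondecreasing sequence creates no inversions,
and since `q (j+1) = q j + p i < q j`, composing with `τ` removes exactly the inversion `(j, j+1)`.
-/

/-- The inversion number of the finite sequence `q 0, q 1, …, q n`. -/
noncomputable def invCount (n : ℕ) (q : ℕ → ℝ) : ℕ :=
  ((Finset.range (n + 1) ×ˢ Finset.range (n + 1)).filter
    fun ab => ab.1 < ab.2 ∧ q ab.2 < q ab.1).card

open Finset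

noncomputable def inversions (n : ℕ) (q : ℕ → ℝ) : Finset (ℕ × ℕ) :=
  (range (n + 1) ×ˢ range (n + 1)).filter fun ab => ab.1 < ab.2 ∧ q ab.2 < q ab.1

theorem card_inversions (n : ℕ) (q : ℕ → ℝ) : (inversions n q).card = invCount n q := rfl

theorem mem_inversions {n : ℕ} {q : ℕ → ℝ} {ab : ℕ × ℕ} :
    ab ∈ inversions n q ↔ ab.1 < ab.2 ∧ ab.2 ≤ n ∧ q ab.2 < q ab.1 := by
  simp only [inversions, mem_filter, mem_product, mem_range, Nat.lt_succ_iff]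
  constructor
  · rintro ⟨⟨-, hb⟩, hab, hq⟩
    exact ⟨hab, hb, hq⟩
  · rintro ⟨hab, hb, hq⟩
    exact ⟨⟨by omega, hb⟩, hab, hq⟩

theorem invCount_le_invCount {n : ℕ} {q q' : ℕ → ℝ}
    (h : ∀ a b, a < b → b ≤ n → q' b < q' a → q b < q a) : invCount n q' ≤ invCount n q := by
  rw [← card_inversions, ← card_inversions]
  refine card_le_card fun ab hab => ?_
  obtain ⟨hlt, hle, hq'⟩ := mem_inversions.1 hab
  exact mem_inversions.2 ⟨hlt, hle, h _ _ hlt hle hq'⟩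

theorem invCount_le_of_eq_add_monotone {n : ℕ} {q q' s : ℕ → ℝ} (hs : Monotone s)
    (h : ∀ a ≤ n, q' a = q a + s a) : invCount n q' ≤ invCount n q :=
  invCount_le_invCount fun a b hab hb hq' => by
    rw [h a (by omega), h b hb] at hq'
    linarith [hs hab.le]

theorem swap_lt_swap_of_ne {j a b : ℕ} (hab : a < b) (hne : (a, b) ≠ (j, j + 1)) :
    Equiv.swap j (j + 1) a < Equiv.swap j (j + 1) b := by
  simp only [Equiv.swap_apply_def, ne_eq, Prod.mk.injEq] at *
  split_ifs <;> omega

theorem invCount_comp_swap_add_one {n j : ℕ} {q : ℕ → ℝ} (hj : j + 1 ≤ n)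
    (hq : q (j + 1) < q j) : invCount n (q ∘ Equiv.swap j (j + 1)) + 1 = invCount n q := by
  set τ := Equiv.swap j (j + 1)
  have hτ : ∀ a, τ (τ a) = a := Equiv.swap_apply_self j (j + 1)
  have hτn : ∀ a ≤ n, τ a ≤ n := fun a ha => by
    simp only [τ, Equiv.swap_apply_def]
    split_ifs <;> omega
  have hmem : (j, j + 1) ∈ inversions n q := mem_inversions.2 ⟨by omega, hj, hq⟩
  rw [← card_inversions, ← card_inversions, ← card_erase_add_one hmem]
  congr 1
  refine card_nbij' (fun ab => (τ ab.1, τ ab.2)) (fun ab => (τ ab.1, τ ab.2)) ?_ ?_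
    (fun ab _ => by simp [hτ]) (fun ab _ => by simp [hτ])
  · rintro ⟨a, b⟩ hab
    obtain ⟨hlt, hb, hqab⟩ := mem_inversions.1 hab
    have hne : (a, b) ≠ (j, j + 1) := by
      rintro ⟨rfl, rfl⟩
      simp only [Function.comp_apply, τ, Equiv.swap_apply_left, Equiv.swap_apply_right] at hqab
      linarith
    refine mem_erase.2 ⟨fun he => ?_, mem_inversions.2 ⟨swap_lt_swap_of_ne hlt hne, hτn b hb, hqab⟩⟩
    obtain ⟨ha', hb'⟩ := Prod.mk.inj he
    have : a = j + 1 ∧ b = j := by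
      rw [← hτ a, ← hτ b, ha', hb']
      simp [τ]
    omega
  · rintro ⟨a, b⟩ hab
    obtain ⟨hne, hab⟩ := mem_erase.1 hab
    obtain ⟨hlt, hb, hqab⟩ := mem_inversions.1 hab
    refine mem_inversions.2 ⟨swap_lt_swap_of_ne hlt hne, hτn b hb, ?_⟩
    simpa only [Function.comp_apply, hτ] using hqab

theorem monotone_ite_le {m : ℕ} {c : ℝ} (hc : 0 ≤ c) :
    Monotone fun a : ℕ => if m ≤ a then c else 0 := fun a b hab => by
  dsimp only
  split_ifs <;> first | rfl | exact hc | omega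

def potential (p : ℕ → ℝ) (a : ℕ) : ℝ :=
  ∑ j ∈ Icc 1 a, p j

@[simp]
theorem potential_zero (p : ℕ → ℝ) : potential p 0 = 0 := by
  simp [potential]

theorem potential_succ (p : ℕ → ℝ) (a : ℕ) : potential p (a + 1) = potential p a + p (a + 1) :=
  sum_Icc_succ_top (by omega) p

theorem potential_eq_add_mul {n a : ℕ} {p p' w : ℕ → ℝ} {c : ℝ}
    (h : ∀ j, 1 ≤ j → j ≤ n → p' j = p j + c * w j) (ha : a ≤ n) :
    potential p' a = potential p a + c * potential w a := by
  rw [potential, potential, potential, mul_sum, ← sum_add_distrib]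
  refine sum_congr rfl fun j hj => ?_
  rw [mem_Icc] at hj
  exact h j hj.1 (hj.2.trans ha)

theorem potential_of_tridiagonal {n j a : ℕ} {w : ℕ → ℝ} (h0 : w 0 = 0)
    (hfar : ∀ m, 1 ≤ m → m ≤ n → (m < j ∨ j + 2 < m) → w m = 0) (ha : a ≤ n) :
    potential w a = (if j ≤ a then w j else 0) + (if j + 1 ≤ a then w (j + 1) else 0) +
      (if j + 2 ≤ a then w (j + 2) else 0) := by
  induction a with
  | zero =>
    rcases Nat.eq_zero_or_pos j with rfl | hj
    · simp [h0]
    · simp [hj.ne']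
  | succ a ih =>
    rw [potential_succ, ih (by omega)]
    obtain rfl | rfl | rfl | hfar' : j = a + 1 ∨ a = j ∨ a = j + 1 ∨ (a + 1 < j ∨ j + 2 < a + 1) :=
      by omega
    any_goals rw [hfar (a + 1) (by omega) ha hfar']
    all_goals split_ifs <;> first | omega | ring

theorem potential_fire {n j : ℕ} {k : ℕ → ℕ → ℝ} {p p' : ℕ → ℝ}
    (hdiag : k (j + 1) (j + 1) = -2) (h0 : k (j + 1) 0 = 0)
    (hfar : ∀ m, 1 ≤ m → m ≤ n → (m < j ∨ j + 2 < m) → k (j + 1) m = 0)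
    (hp' : ∀ m, 1 ≤ m → m ≤ n → p' m = p m + p (j + 1) * k (j + 1) m) {a : ℕ} (ha : a ≤ n) :
    potential p' a = potential p (Equiv.swap j (j + 1) a) +
      ((if j ≤ a then p (j + 1) * (k (j + 1) j - 1) else 0) +
        (if j + 2 ≤ a then p (j + 1) * (k (j + 1) (j + 2) - 1) else 0)) := by
  rw [potential_eq_add_mul hp' ha, potential_of_tridiagonal h0 hfar ha, hdiag,
    Equiv.swap_apply_def]
  have hstep := potential_succ p j
  split_ifs <;> subst_vars <;>
    first | omega | ring1 | linear_combination hstep | linear_combination -hstep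

theorem inv_potential_decreases_after_negative_firing_general
    (n : ℕ) (k : ℕ → ℕ → ℝ)
    (hdiag : ∀ i, 1 ≤ i → i ≤ n → k i i = -2)
    (hfar : ∀ i j, 1 ≤ i → i ≤ n → 1 ≤ j → j ≤ n → (i + 1 < j ∨ j + 1 < i) → k i j = 0)
    (hext0 : ∀ i, 1 ≤ i → i ≤ n → k i 0 = 0)
    (p : ℕ → ℝ) (i : ℕ) (hi1 : 1 ≤ i) (hi2 : i ≤ n) (hneg : p i < 0)
    (hk1 : k i (i - 1) ≤ 1) (hk2 : k i (i + 1) ≤ 1)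
    (p' : ℕ → ℝ) (hp' : ∀ j, 1 ≤ j → j ≤ n → p' j = p j + p i * k i j) :
    invCount n (fun a => ∑ j ∈ Finset.Icc 1 a, p' j) + 1 ≤
      invCount n (fun a => ∑ j ∈ Finset.Icc 1 a, p j) := by
  obtain ⟨j, rfl⟩ : ∃ j, i = j + 1 := ⟨i - 1, by omega⟩
  rw [Nat.add_sub_cancel] at hk1
  have hshift : Monotone fun a =>
      (if j ≤ a then p (j + 1) * (k (j + 1) j - 1) else 0) +
        (if j + 2 ≤ a then p (j + 1) * (k (j + 1) (j + 2) - 1) else 0) :=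
    (monotone_ite_le (by nlinarith)).add (monotone_ite_le (by nlinarith))
  have hfire : ∀ a ≤ n, potential p' a = (potential p ∘ Equiv.swap j (j + 1)) a + _ :=
    fun a ha => potential_fire (hdiag _ hi1 hi2) (hext0 _ hi1 hi2)
      (fun m hm1 hmn hm => hfar _ m hi1 hi2 hm1 hmn (by omega)) hp' ha
  calc invCount n (potential p') + 1
      ≤ invCount n (potential p ∘ Equiv.swap j (j + 1)) + 1 :=
        Nat.add_le_add_right (invCount_le_of_eq_add_monotone hshift hfire) 1
    _ = invCount n (potential p) :=
        invCount_comp_swap_add_one hi2 (by rw [potential_succ]; linarith)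

/-- Firing a negative index `i` with `k (i, i-1) ≤ 1` and `k (i, i+1) ≤ 1`
decreases the inversion number of the potential by at least one.
The position is `p 1, …, p n`, its potential `q a = p 1 + ⋯ + p a` (`a = 0, …, n`),
and firing `i` replaces each `p j` by `p j + p i * k i j`. -/
theorem inv_potential_decreases_after_negative_firing
    (n : ℕ) (hn : 1 ≤ n) (k : ℕ → ℕ → ℝ)
    (hdiag : ∀ i, 1 ≤ i → i ≤ n → k i i = -2)
    (hsym : ∀ i j, 1 ≤ i → i ≤ n → 1 ≤ j → j ≤ n → k i j = k j i)
    (hfar : ∀ i j, 1 ≤ i → i ≤ n → 1 ≤ j → j ≤ n → (i + 1 < j ∨ j + 1 < i) → k i j = 0)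
    (hext0 : ∀ i, 1 ≤ i → i ≤ n → k i 0 = 0)
    (hextn : ∀ i, 1 ≤ i → i ≤ n → k i (n + 1) = 0)
    (p : ℕ → ℝ) (i : ℕ) (hi1 : 1 ≤ i) (hi2 : i ≤ n) (hneg : p i < 0)
    (hk1 : k i (i - 1) ≤ 1) (hk2 : k i (i + 1) ≤ 1)
    (p' : ℕ → ℝ) (hp' : ∀ j, 1 ≤ j → j ≤ n → p' j = p j + p i * k i j) :
    invCount n (fun a => ∑ j ∈ Finset.Icc 1 a, p' j) + 1 ≤
      invCount n (fun a => ∑ j ∈ Finset.Icc 1 a, p j) :=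
  inv_potential_decreases_after_negative_firing_general n k hdiag hfar hext0 p i hi1 hi2 hneg hk1
    hk2 p' hp'
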